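/- Let H be a finite group and R a commutative ring. Then Ext^1_{RH}(R, F) = 0 for every flat RH-module F, where R carries the trivial H-action. -/

import Mathlib

open TensorProduct CategoryTheory
universe u

/-! ### Tensor product of a right module and a left module over an arbitrary ring -/

section OT
variable (Λ : Type u) [Ring Λ]
variable (I : Type u) [AddCommGroup I] [Module Λᵐᵒᵖ I]
variable (N : Type u) [AddCommGroup N] [Module Λ N]

/-- Relations defining the tensor product `I ⊗[Λ] N` of a right module and a left module. -/
def otRel : Submodule ℤ (TensorProduct ℤ I N) :=
  Submodule.span ℤ {x | ∃ (l : Λ) (i : I) (n : N),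
    x = (MulOpposite.op l • i) ⊗ₜ[ℤ] n - i ⊗ₜ[ℤ] (l • n)}

/-- The tensor product `I ⊗[Λ] N` of a right `Λ`-module and a left `Λ`-module. -/
abbrev OT := TensorProduct ℤ I N ⧸ otRel Λ I N

variable {Λ I N}
variable {N' : Type u} [AddCommGroup N'] [Module Λ N']
variable {I' : Type u} [AddCommGroup I'] [Module Λᵐᵒᵖ I']

/-- Functoriality of `OT` in the left-module variable. -/
noncomputable def OTmap (f : N →ₗ[Λ] N') : OT Λ I N →ₗ[ℤ] OT Λ I N' :=
  Submodule.mapQ _ _ (LinearMap.lTensor I f.toAddMonoidHom.toIntLinearMap) <| by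
    refine Submodule.span_le.2 ?_
    rintro x ⟨l, i, n, rfl⟩
    refine Submodule.subset_span ⟨l, i, f n, ?_⟩
    erw [map_sub, LinearMap.lTensor_tmul, LinearMap.lTensor_tmul]
    simp [map_smul]

/-- Functoriality of `OT` in the right-module variable. -/
noncomputable def OTmapL (f : I →ₗ[Λᵐᵒᵖ] I') (N : Type u) [AddCommGroup N] [Module Λ N] :
    OT Λ I N →ₗ[ℤ] OT Λ I' N :=
  Submodule.mapQ _ _ (LinearMap.rTensor N f.toAddMonoidHom.toIntLinearMap) <| by
    refine Submodule.span_le.2 ?_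
    rintro x ⟨l, i, n, rfl⟩
    refine Submodule.subset_span ⟨l, f i, n, ?_⟩
    erw [map_sub, LinearMap.rTensor_tmul, LinearMap.rTensor_tmul]
    simp [map_smul]
end OT

/-! ### Flatness, Gorenstein flatness and the various homological dimensions -/

section GF
variable (Λ : Type u) [Ring Λ]

/-- A left `Λ`-module `M` is flat if tensoring with it preserves injectivity of maps of
right `Λ`-modules. -/
def IsFlat (M : ModuleCat.{u} Λ) : Prop :=
  ∀ (A B : ModuleCat.{u} Λᵐᵒᵖ) (f : A →ₗ[Λᵐᵒᵖ] B), Function.Injective f →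
    Function.Injective (OTmapL (Λ := Λ) f M)

/-- An acyclic complex of flat left `Λ`-modules. -/
structure FlatCx : Type (u + 1) where
  X : ℤ → ModuleCat.{u} Λ
  d : ∀ i : ℤ, X (i + 1) →ₗ[Λ] X i
  flat : ∀ i, IsFlat Λ (X i)
  acyclic : ∀ i : ℤ, Function.Exact (d (i + 1)) (d i)

/-- Total acyclicity: `I ⊗[Λ] -` preserves acyclicity for every injective right module `I`. -/
def FlatCx.TotAcyclic (C : FlatCx Λ) : Prop :=
  ∀ (I : ModuleCat.{u} Λᵐᵒᵖ), Module.Injective Λᵐᵒᵖ I →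
    ∀ i : ℤ, Function.Exact (OTmap (I := I) (C.d (i + 1))) (OTmap (I := I) (C.d i))

/-- Gorenstein flat modules: cycles of totally acyclic complexes of flat modules. -/
def IsGF (M : ModuleCat.{u} Λ) : Prop :=
  ∃ C : FlatCx Λ, C.TotAcyclic ∧ ∃ i : ℤ, Nonempty (M ≃ₗ[Λ] LinearMap.ker (C.d i))

/-- Gorenstein flat dimension at most `n`. -/
def GfdLE : ℕ → ModuleCat.{u} Λ → Prop
  | 0, M => IsGF Λ M
  | n + 1, M => ∃ (F : ModuleCat.{u} Λ) (p : F →ₗ[Λ] M), Function.Surjective p ∧ IsGF Λ F ∧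
      GfdLE n (ModuleCat.of Λ (LinearMap.ker p))

/-- The Gorenstein flat dimension, as an extended natural number. -/
noncomputable def gfd (M : ModuleCat.{u} Λ) : ℕ∞ := sInf ((↑) '' {n : ℕ | GfdLE Λ n M})

/-- Flat dimension at most `n`. -/
def FdLE : ℕ → ModuleCat.{u} Λ → Prop
  | 0, M => IsFlat Λ M
  | n + 1, M => ∃ (F : ModuleCat.{u} Λ) (p : F →ₗ[Λ] M), Function.Surjective p ∧ IsFlat Λ F ∧
      FdLE n (ModuleCat.of Λ (LinearMap.ker p))

/-- The flat dimension, as an extended natural number. -/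
noncomputable def fdim (M : ModuleCat.{u} Λ) : ℕ∞ := sInf ((↑) '' {n : ℕ | FdLE Λ n M})

/-- Projective dimension at most `n`. -/
def PdLE : ℕ → ModuleCat.{u} Λ → Prop
  | 0, M => Module.Projective Λ M
  | n + 1, M => ∃ (F : ModuleCat.{u} Λ) (p : F →ₗ[Λ] M), Function.Surjective p ∧
      Module.Projective Λ F ∧ PdLE n (ModuleCat.of Λ (LinearMap.ker p))

/-- The projective dimension, as an extended natural number. -/
noncomputable def pdim (M : ModuleCat.{u} Λ) : ℕ∞ := sInf ((↑) '' {n : ℕ | PdLE Λ n M})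

/-- Injective dimension at most `n`. -/
def IdLE : ℕ → ModuleCat.{u} Λ → Prop
  | 0, M => Module.Injective Λ M
  | n + 1, M => ∃ (J : ModuleCat.{u} Λ) (j : M →ₗ[Λ] J), Function.Injective j ∧
      Module.Injective Λ J ∧ IdLE n (ModuleCat.of Λ (J ⧸ LinearMap.range j))

/-- The injective dimension, as an extended natural number. -/
noncomputable def idim (M : ModuleCat.{u} Λ) : ℕ∞ := sInf ((↑) '' {n : ℕ | IdLE Λ n M})

/-- `sfli Λ`: the supremum of the flat dimensions of injective left `Λ`-modules. -/
noncomputable def sfli : ℕ∞ := ⨆ (I : ModuleCat.{u} Λ) (_ : Module.Injective Λ I), fdim Λ I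
/-- `silf Λ`: the supremum of the injective dimensions of flat left `Λ`-modules. -/
noncomputable def silf : ℕ∞ := ⨆ (F : ModuleCat.{u} Λ) (_ : IsFlat Λ F), idim Λ F
/-- `spli Λ`: the supremum of the projective dimensions of injective left `Λ`-modules. -/
noncomputable def spli : ℕ∞ := ⨆ (I : ModuleCat.{u} Λ) (_ : Module.Injective Λ I), pdim Λ I
/-- `silp Λ`: the supremum of the injective dimensions of projective left `Λ`-modules. -/
noncomputable def silp : ℕ∞ := ⨆ (P : ModuleCat.{u} Λ) (_ : Module.Projective Λ P), idim Λ P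
/-- `splf Λ`: the supremum of the projective dimensions of flat left `Λ`-modules. -/
noncomputable def splf : ℕ∞ := ⨆ (F : ModuleCat.{u} Λ) (_ : IsFlat Λ F), pdim Λ F
/-- The weak global dimension. -/
noncomputable def wgldim : ℕ∞ := ⨆ (M : ModuleCat.{u} Λ), fdim Λ M
/-- The Gorenstein weak global dimension. -/
noncomputable def Gwgldim : ℕ∞ := ⨆ (M : ModuleCat.{u} Λ), gfd Λ M
end GF

/-! ### Gorenstein projective and PGF modules -/

section GP
variable (Λ : Type u) [Ring Λ]

/-- An acyclic complex of projective left `Λ`-modules. -/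
structure ProjCx : Type (u + 1) where
  X : ℤ → ModuleCat.{u} Λ
  d : ∀ i : ℤ, X (i + 1) →ₗ[Λ] X i
  proj : ∀ i, Module.Projective Λ (X i)
  acyclic : ∀ i : ℤ, Function.Exact (d (i + 1)) (d i)

/-- The complex stays acyclic after applying `Hom(-, Q)` for every projective `Q`. -/
def ProjCx.HomTotAcyclic (C : ProjCx Λ) : Prop :=
  ∀ (Q : ModuleCat.{u} Λ), Module.Projective Λ Q →
    ∀ i : ℤ, Function.Exact (fun g : C.X i →ₗ[Λ] Q => g ∘ₗ C.d i)
      (fun g : C.X (i + 1) →ₗ[Λ] Q => g ∘ₗ C.d (i + 1))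

/-- The complex stays acyclic after applying `I ⊗[Λ] -` for every injective right module `I`. -/
def ProjCx.TensTotAcyclic (C : ProjCx Λ) : Prop :=
  ∀ (I : ModuleCat.{u} Λᵐᵒᵖ), Module.Injective Λᵐᵒᵖ I →
    ∀ i : ℤ, Function.Exact (OTmap (I := I) (C.d (i + 1))) (OTmap (I := I) (C.d i))

/-- Gorenstein projective modules. -/
def IsGP (M : ModuleCat.{u} Λ) : Prop :=
  ∃ C : ProjCx Λ, C.HomTotAcyclic ∧ ∃ i : ℤ, Nonempty (M ≃ₗ[Λ] LinearMap.ker (C.d i))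

/-- Projectively coresolved Gorenstein flat (PGF) modules. -/
def IsPGF (M : ModuleCat.{u} Λ) : Prop :=
  ∃ C : ProjCx Λ, C.TensTotAcyclic ∧ ∃ i : ℤ, Nonempty (M ≃ₗ[Λ] LinearMap.ker (C.d i))

/-- Gorenstein projective dimension at most `n`. -/
def GpdLE : ℕ → ModuleCat.{u} Λ → Prop
  | 0, M => IsGP Λ M
  | n + 1, M => ∃ (F : ModuleCat.{u} Λ) (p : F →ₗ[Λ] M), Function.Surjective p ∧ IsGP Λ F ∧
      GpdLE n (ModuleCat.of Λ (LinearMap.ker p))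

/-- The Gorenstein projective dimension. -/
noncomputable def gpd (M : ModuleCat.{u} Λ) : ℕ∞ := sInf ((↑) '' {n : ℕ | GpdLE Λ n M})

/-- PGF dimension at most `n`. -/
def PGFdLE : ℕ → ModuleCat.{u} Λ → Prop
  | 0, M => IsPGF Λ M
  | n + 1, M => ∃ (F : ModuleCat.{u} Λ) (p : F →ₗ[Λ] M), Function.Surjective p ∧ IsPGF Λ F ∧
      PGFdLE n (ModuleCat.of Λ (LinearMap.ker p))

/-- The PGF dimension. -/
noncomputable def pgfd (M : ModuleCat.{u} Λ) : ℕ∞ := sInf ((↑) '' {n : ℕ | PGFdLE Λ n M})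

/-- The Gorenstein global dimension. -/
noncomputable def Ggldim : ℕ∞ := ⨆ (M : ModuleCat.{u} Λ), gpd Λ M
/-- The PGF global dimension. -/
noncomputable def PGFgldim : ℕ∞ := ⨆ (M : ModuleCat.{u} Λ), pgfd Λ M
end GP

/-! ### Tor -/

section Tor
variable (Λ : Type u) [Ring Λ]

/-- Vanishing of `Tor_n^Λ(I, M)`, defined through dimension shifting along flat covers. -/
def TorVanish (I : ModuleCat.{u} Λᵐᵒᵖ) : ℕ → ModuleCat.{u} Λ → Prop
  | 0, M => Subsingleton (OT Λ I M)
  | 1, M => ∃ (F : ModuleCat.{u} Λ) (p : F →ₗ[Λ] M), Function.Surjective p ∧ IsFlat Λ F ∧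
      Function.Injective (OTmap (I := I) (LinearMap.ker p).subtype)
  | n + 2, M => ∃ (F : ModuleCat.{u} Λ) (p : F →ₗ[Λ] M), Function.Surjective p ∧ IsFlat Λ F ∧
      TorVanish I (n + 1) (ModuleCat.of Λ (LinearMap.ker p))
end Tor

/-! ### Group rings -/

section Grp
variable (R : Type u) [CommRing R] (G : Type u) [Group G]

/-- `R` as a module over the group ring `MonoidAlgebra R G` with trivial `G`-action. -/
noncomputable def trivSMul : Module (MonoidAlgebra R G) R :=
  Module.compHom R ((MonoidAlgebra.lift R R G) 1).toRingHom

/-- The trivial `MonoidAlgebra R G`-module `R`. -/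
noncomputable def trivMod : ModuleCat.{u} (MonoidAlgebra R G) :=
  @ModuleCat.of (MonoidAlgebra R G) _ R _ (trivSMul R G)

/-- Restriction of scalars from `MonoidAlgebra R G`-modules to `R`-modules. -/
noncomputable def resR : ModuleCat.{u} (MonoidAlgebra R G) ⥤ ModuleCat.{u} R :=
  ModuleCat.restrictScalars (algebraMap R (MonoidAlgebra R G))

/-- The Gorenstein homological dimension of the group `G` over `R`. -/
noncomputable def Ghd : ℕ∞ := gfd (MonoidAlgebra R G) (trivMod R G)
end Grp

/-!
STATEMENT 12: Let `H` be a finite group and `R` a commutative ring.  Then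
`Ext¹_{RH}(R, F) = 0` for every flat `RH`-module `F`, where `R` carries the trivial
`H`-action.  Vanishing of `Ext¹` is expressed by the splitting of every short exact
sequence `0 → F → E → R → 0` of `RH`-modules.
-/

/-!
Choose `e₀ ∈ E` with `p e₀ = 1`. Then `h ↦ h • e₀ - e₀` is a 1-cocycle of `H` with values in
`F = ker p`, and the extension splits as soon as it is a coboundary `h ↦ h • x - x`: the element
`e₀ - x` is then `H`-invariant, so `r ↦ r • (e₀ - x)` is an `RH`-linear section of `p`.

Every cocycle with values in `RH` itself is a coboundary (`RH` is induced from the trivial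
subgroup), hence so is every cocycle with values in a finite free module. For flat `F` the
equational criterion for flatness factors the finitely many values of the cocycle through a
finite free module in a way that preserves the finitely many cocycle relations, which reduces
the flat case to the free one.
-/

namespace OT
open MulOpposite Matrix

variable {Λ : Type u} [Ring Λ] {N : Type u} [AddCommGroup N] [Module Λ N]
  {I : Type u} [AddCommGroup I] [Module Λᵐᵒᵖ I]

variable (Λ) in
noncomputable def tmul : I →ₗ[ℤ] N →ₗ[ℤ] OT Λ I N :=
  (TensorProduct.mk ℤ I N).compr₂ (otRel Λ I N).mkQ

theorem tmul_op_smul (l : Λ) (w : I) (n : N) : tmul Λ (op l • w) n = tmul Λ w (l • n) :=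
  (Submodule.Quotient.eq _).2 (Submodule.subset_span ⟨l, w, n, rfl⟩)

theorem exists_finset_eq_sum_tmul (z : OT Λ I N) :
    ∃ S : Finset (I × N), z = ∑ x ∈ S, tmul Λ x.1 x.2 := by
  obtain ⟨t, rfl⟩ := Submodule.mkQ_surjective _ z
  obtain ⟨S, rfl⟩ := TensorProduct.exists_finset t
  exact ⟨S, map_sum _ _ _⟩

theorem OTmapL_tmul {I' : Type u} [AddCommGroup I'] [Module Λᵐᵒᵖ I'] (f : I →ₗ[Λᵐᵒᵖ] I')
    (w : I) (n : N) : OTmapL f N (tmul Λ w n) = tmul Λ (f w) n := rfl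

theorem otRel_quotient_le_map (K : Submodule Λᵐᵒᵖ I) :
    otRel Λ (I ⧸ K) N ≤ (otRel Λ I N).map (K.mkQ.toAddMonoidHom.toIntLinearMap.rTensor N) := by
  refine Submodule.span_le.2 ?_
  rintro _ ⟨l, w, n, rfl⟩
  obtain ⟨c, rfl⟩ := K.mkQ_surjective w
  exact ⟨_, Submodule.subset_span ⟨l, c, n, rfl⟩, by simp⟩

theorem exists_OTmapL_subtype_eq_of_OTmapL_mkQ_eq_zero (K : Submodule Λᵐᵒᵖ I) {z : OT Λ I N}
    (hz : OTmapL K.mkQ N z = 0) : ∃ y : OT Λ K N, OTmapL K.subtype N y = z := by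
  obtain ⟨t, rfl⟩ := Submodule.mkQ_surjective _ z
  obtain ⟨u, hu, htu⟩ := otRel_quotient_le_map K ((Submodule.Quotient.mk_eq_zero _).1 hz)
  have hexact := rTensor_exact N (LinearMap.exact_subtype_mkQ (K.restrictScalars ℤ))
    (K.restrictScalars ℤ).mkQ_surjective
  obtain ⟨s, hs⟩ := (hexact (t - u)).1 (by rw [map_sub]; exact sub_eq_zero.2 htu.symm)
  refine ⟨Submodule.mkQ _ s, (Submodule.Quotient.eq _).2 ?_⟩
  have : LinearMap.rTensor N (K.subtype.toAddMonoidHom.toIntLinearMap) s - t = -u := by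
    erw [hs]; abel
  exact this ▸ neg_mem hu

theorem OTmapL_OTmapL {I₁ I₂ I₃ : Type u} [AddCommGroup I₁] [Module Λᵐᵒᵖ I₁] [AddCommGroup I₂]
    [Module Λᵐᵒᵖ I₂] [AddCommGroup I₃] [Module Λᵐᵒᵖ I₃] (g : I₂ →ₗ[Λᵐᵒᵖ] I₃)
    (f : I₁ →ₗ[Λᵐᵒᵖ] I₂) (z : OT Λ I₁ N) : OTmapL g N (OTmapL f N z) = OTmapL (g ∘ₗ f) N z := by
  obtain ⟨S, rfl⟩ := exists_finset_eq_sum_tmul z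
  simp only [map_sum, OTmapL_tmul, LinearMap.comp_apply]

variable (Λ N) in
noncomputable def evalPi (ι : Type u) : OT Λ (ι → Λ) N →ₗ[ℤ] (ι → N) :=
  (otRel Λ (ι → Λ) N).liftQ
    (TensorProduct.lift (LinearMap.mk₂ ℤ (fun (w : ι → Λ) (n : N) i => w i • n)
      (by intros; ext; simp [add_smul]) (by intros; ext; simp [mul_smul, Int.cast_smul_eq_zsmul])
      (by intros; ext; simp) (by intros; ext; exact smul_comm _ _ _))) <| by
    refine Submodule.span_le.2 ?_
    rintro _ ⟨l, w, n, rfl⟩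
    ext i
    erw [map_sub, TensorProduct.lift.tmul, TensorProduct.lift.tmul]
    simp [mul_smul]

theorem evalPi_tmul {ι : Type u} (w : ι → Λ) (n : N) :
    evalPi Λ N ι (tmul Λ w n) = fun i => w i • n := rfl

variable {ι : Type u} [Fintype ι] [DecidableEq ι]

theorem evalPi_sum_tmul_single (f : ι → N) :
    evalPi Λ N ι (∑ i, tmul Λ (Pi.single i 1) (f i)) = f := by
  ext j
  simp [evalPi_tmul, Pi.single_apply]

theorem OTmapL_mulVec_sum_tmul_single {κ : Type u} [Fintype κ] [DecidableEq κ]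
    (lam : Matrix κ ι Λ) (f : ι → N) :
    OTmapL (Matrix.mulVecBilin Λ Λᵐᵒᵖ lam) N (∑ i, tmul Λ (Pi.single i 1) (f i)) =
      ∑ k, tmul Λ (Pi.single k 1) (∑ i, lam k i • f i) := by
  have hcol : ∀ i, lam *ᵥ Pi.single i 1 = ∑ k, op (lam k i) • Pi.single k 1 := by
    intro i
    ext k
    simp [Pi.single_apply]
  simp only [map_sum, OTmapL_tmul, Matrix.mulVecBilin_apply, hcol, LinearMap.sum_apply,
    tmul_op_smul]
  exact Finset.sum_comm

end OT

section Flat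
open Matrix OT

variable {Λ : Type u} [Ring Λ]

theorem IsFlat.exists_finset_of_sum_smul_eq_zero {F : ModuleCat.{u} Λ} (hF : IsFlat Λ F)
    {ι κ : Type u} [Fintype ι] [Fintype κ] (lam : Matrix κ ι Λ) (f : ι → F)
    (hf : ∀ k, ∑ i, lam k i • f i = 0) :
    ∃ S : Finset ((ι → Λ) × F), (∀ i, f i = ∑ x ∈ S, x.1 i • x.2) ∧ ∀ x ∈ S, lam *ᵥ x.1 = 0 := by
  classical
  set z : OT Λ (ι → Λ) F := ∑ i, tmul Λ (Pi.single i 1) (f i) with hz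
  have hμz : OTmapL (mulVecBilin Λ Λᵐᵒᵖ lam) F z = 0 := by
    simp only [hz, OTmapL_mulVec_sum_tmul_single, hf, map_zero, Finset.sum_const_zero]
  set μ := mulVecBilin Λ Λᵐᵒᵖ lam
  set K := LinearMap.ker μ
  -- flatness applied to the embedding `(ι → Λ) ⧸ ker μ ↪ κ → Λ`
  have hKz : OTmapL K.mkQ F z = 0 := by
    refine hF (.of _ ((ι → Λ) ⧸ K)) (.of _ (κ → Λ)) (K.liftQ μ le_rfl)
      (LinearMap.ker_eq_bot.1 (K.ker_liftQ_eq_bot μ le_rfl le_rfl)) ?_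
    rw [OTmapL_OTmapL, K.liftQ_mkQ, hμz, map_zero]
  obtain ⟨y, hy⟩ := exists_OTmapL_subtype_eq_of_OTmapL_mkQ_eq_zero K hKz
  obtain ⟨S, rfl⟩ := exists_finset_eq_sum_tmul y
  refine ⟨S.map ((Function.Embedding.subtype _).prodMap (.refl F)), fun i => ?_, ?_⟩
  · have h := congrArg (evalPi Λ F ι) hy
    rw [hz, evalPi_sum_tmul_single] at h
    simpa [OTmapL_tmul, evalPi_tmul] using (congrFun h i).symm
  · intro _ hx
    obtain ⟨x, -, rfl⟩ := Finset.mem_map.1 hx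
    exact x.1.2

end Flat

section GroupAlgebra
open MonoidAlgebra

variable {R : Type u} [CommRing R] {H : Type u} [Group H]

theorem MonoidAlgebra.exists_coboundary_of_cocycle [Fintype H] (a : H → MonoidAlgebra R H)
    (ha : ∀ g h, a (g * h) = of R H g * a h + a g) :
    ∃ b : MonoidAlgebra R H, ∀ h, a h = of R H h * b - b := by
  classical
  -- The cocycle identity for `(h, h⁻¹ * k)`, read at the coefficient `k`, says exactly that
  -- minus the diagonal `k ↦ (a k)(k)` works.
  set b : MonoidAlgebra R H := ∑ t, single t (-(a t).coeff t)
  have hb : ∀ k, b.coeff k = -(a k).coeff k := by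
    intro k
    simp [b, coeff_sum, coeff_single, Finsupp.single_apply]
  refine ⟨b, fun h => ?_⟩
  ext k
  have hk := congrArg (fun x : MonoidAlgebra R H => x.coeff k) (ha h (h⁻¹ * k))
  simp only [mul_inv_cancel_left, of_apply, coeff_add, Finsupp.add_apply, coeff_single_mul_apply,
    one_mul] at hk
  simp only [of_apply, coeff_sub, Finsupp.sub_apply, coeff_single_mul_apply, one_mul, hb]
  linear_combination -hk

variable (R H) in
noncomputable def cocycleMatrix [DecidableEq H] : Matrix (H × H) H (MonoidAlgebra R H) :=
  fun gh => Pi.single gh.2 (of R H gh.1) - Pi.single (gh.1 * gh.2) 1 + Pi.single gh.1 1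

theorem sum_cocycleMatrix_smul [Fintype H] [DecidableEq H] {M : Type*} [AddCommGroup M]
    [Module (MonoidAlgebra R H) M] (v : H → M) (g h : H) :
    ∑ k, cocycleMatrix R H (g, h) k • v k = of R H g • v h - v (g * h) + v g := by
  simp [cocycleMatrix, add_smul, sub_smul, Finset.sum_add_distrib, Pi.single_apply, ite_smul]

theorem sum_cocycleMatrix_smul_eq_zero_iff [Fintype H] [DecidableEq H] {M : Type*}
    [AddCommGroup M] [Module (MonoidAlgebra R H) M] (v : H → M) :
    (∀ gh, ∑ k, cocycleMatrix R H gh k • v k = 0) ↔ ∀ g h, v (g * h) = of R H g • v h + v g := by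
  simp only [Prod.forall, sum_cocycleMatrix_smul]
  refine forall₂_congr fun g h => ?_
  rw [sub_add_eq_add_sub, sub_eq_zero, eq_comm]

theorem IsFlat.exists_coboundary_of_cocycle [Fintype H] {F : ModuleCat.{u} (MonoidAlgebra R H)}
    (hF : IsFlat _ F) (f : H → F) (hf : ∀ g h, f (g * h) = of R H g • f h + f g) :
    ∃ x : F, ∀ h, f h = of R H h • x - x := by
  classical
  obtain ⟨S, hfS, hS⟩ := hF.exists_finset_of_sum_smul_eq_zero (cocycleMatrix R H) f
    ((sum_cocycleMatrix_smul_eq_zero_iff f).2 hf)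
  have hcocycle (x : S) : ∀ g h, x.1.1 (g * h) = of R H g * x.1.1 h + x.1.1 g :=
    (sum_cocycleMatrix_smul_eq_zero_iff (R := R) x.1.1).1 fun gh => by
      simpa [Matrix.mulVec, dotProduct] using congrFun (hS x.1 x.2) gh
  choose b hb using fun x : S => MonoidAlgebra.exists_coboundary_of_cocycle _ (hcocycle x)
  refine ⟨∑ x : S, b x • x.1.2, fun h => ?_⟩
  rw [hfS h, ← Finset.sum_coe_sort S, Finset.smul_sum, ← Finset.sum_sub_distrib]
  refine Finset.sum_congr rfl fun x _ => ?_
  rw [hb x h, sub_smul, mul_smul]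

theorem smul_eq_algebraMap_lift_smul_of_invariant {E : Type*} [AddCommGroup E]
    [Module (MonoidAlgebra R H) E] {e : E} (he : ∀ h, of R H h • e = e) (l : MonoidAlgebra R H) :
    l • e = algebraMap R (MonoidAlgebra R H) (MonoidAlgebra.lift R R H 1 l) • e := by
  induction l using MonoidAlgebra.induction_linear with
  | zero => simp
  | add x y hx hy => rw [add_smul, hx, hy, map_add, map_add, add_smul]
  | single h r =>
    rw [lift_single, single_eq_algebraMap_mul_of, mul_smul, he]
    simp

noncomputable def trivModLift {E : Type u} [AddCommGroup E] [Module (MonoidAlgebra R H) E]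
    (e : E) (he : ∀ h, of R H h • e = e) : trivMod R H →ₗ[MonoidAlgebra R H] E where
  toFun (r : R) := algebraMap R (MonoidAlgebra R H) r • e
  map_add' (r s : R) := by
    show algebraMap R _ (r + s) • e = _
    rw [map_add, add_smul]
  map_smul' l (r : R) := by
    show algebraMap R _ (MonoidAlgebra.lift R R H 1 l * r) • e = l • algebraMap R _ r • e
    rw [mul_comm, map_mul, mul_smul, ← smul_eq_algebraMap_lift_smul_of_invariant he,
      ← mul_smul, ← mul_smul, Algebra.commutes]

theorem comp_trivModLift {E : Type u} [AddCommGroup E] [Module (MonoidAlgebra R H) E]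
    (p : E →ₗ[MonoidAlgebra R H] trivMod R H) {e : E} (he : ∀ h, of R H h • e = e)
    (hpe : p e = (1 : R)) : p ∘ₗ trivModLift e he = LinearMap.id := by
  ext (r : R)
  show p (algebraMap R (MonoidAlgebra R H) r • e) = r
  rw [map_smul, hpe]
  show MonoidAlgebra.lift R R H 1 (algebraMap R (MonoidAlgebra R H) r) * 1 = r
  simp

end GroupAlgebra

open MonoidAlgebra in
theorem stmt12 (R H : Type u) [CommRing R] [Group H] [Finite H]
    (F : ModuleCat.{u} (MonoidAlgebra R H)) (hF : IsFlat (MonoidAlgebra R H) F)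
    (E : ModuleCat.{u} (MonoidAlgebra R H))
    (i : F →ₗ[MonoidAlgebra R H] E) (p : E →ₗ[MonoidAlgebra R H] trivMod R H)
    (hi : Function.Injective i) (hp : Function.Surjective p) (hex : Function.Exact i p) :
    ∃ s : trivMod R H →ₗ[MonoidAlgebra R H] E, p ∘ₗ s = LinearMap.id := by
  have := Fintype.ofFinite H
  obtain ⟨e₀, he₀⟩ := hp (1 : R)
  have hp_smul (h : H) : p (of R H h • e₀) = p e₀ := by
    rw [map_smul, he₀]
    show MonoidAlgebra.lift R R H 1 (of R H h) * 1 = 1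
    simp
  choose f hf using fun h => (hex (of R H h • e₀ - e₀)).1 (by rw [map_sub, hp_smul, sub_self])
  have hf_cocycle (g h : H) : f (g * h) = of R H g • f h + f g :=
    hi (by simp only [map_add, map_smul, hf, smul_sub, ← mul_smul, ← map_mul]; abel)
  obtain ⟨x, hx⟩ := hF.exists_coboundary_of_cocycle f hf_cocycle
  have hinv (h : H) : of R H h • (e₀ - i x) = e₀ - i x := by
    have := congrArg i (hx h)
    rw [hf, map_sub, map_smul] at this
    rw [smul_sub]
    linear_combination (norm := abel_nf) this
  refine ⟨trivModLift _ hinv, comp_trivModLift p hinv ?_⟩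
  rw [map_sub, he₀, (hex _).2 ⟨x, rfl⟩]
  exact sub_zero (1 : R)
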